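/- For every θ₁ ∈ ℝ, b₁, b₃ ∈ ℝ and b₂ > 0: inf_{θ₂∈ℝ} P(θ₁, θ₂, b₁, b₂, b₃) ≤ inf_{θ₂∈ℝ} P(θ₁, θ₂, 0, b₂, b₃) = P(θ₁, 0, 0, b₂, b₃). Moreover P(θ₁, 0, 0, b₂, b₃) = (1/π)·exp(θ₁²/2)·Q(θ₁, b₂, b₃). -/

import Mathlib

open MeasureTheory

/-- The tilted Gaussian integral
`P(θ₁,θ₂,b₁,b₂,b₃) = (1/(2π)) ∬_{t₁ + b₃ ≥ b₂·|t₂ + b₁|} exp(θ₁t₁ + θ₂t₂ − (t₁²+t₂²)/2)`. -/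
noncomputable def Ptilt (θ₁ θ₂ b₁ b₂ b₃ : ℝ) : ℝ :=
  (1 / (2 * Real.pi)) *
    ∫ p : ℝ × ℝ in {p : ℝ × ℝ | b₂ * |p.2 + b₁| ≤ p.1 + b₃},
      Real.exp (θ₁ * p.1 + θ₂ * p.2 - (p.1 ^ 2 + p.2 ^ 2) / 2)

/-- `Q(θ,a₁,a₂) = ∫₀^∞ ∫_{a₁z₂}^∞ exp(−((z₁−θ−a₂)² + z₂²)/2) dz₁ dz₂`. -/
noncomputable def Q (θ a₁ a₂ : ℝ) : ℝ :=
  ∫ z₂ in Set.Ioi (0:ℝ), ∫ z₁ in Set.Ioi (a₁ * z₂),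
    Real.exp (-((z₁ - θ - a₂) ^ 2 + z₂ ^ 2) / 2)

/-!
Write the weight as `exp (θ₂ t₂)` times a weight that is even in `t₂`. For `b₁ = 0` the region is
symmetric under `t₂ ↦ -t₂`, so averaging `θ₂` and `-θ₂` and using `cosh ≥ 1` shows that `θ₂ = 0`
minimises. Moving the region by `b₁` is the same as moving the Gaussian by `b₁` over the centred
region; the reflection `t₂ ↦ b₁ - t₂` exchanges the two Gaussians on the part of the region it
preserves, and on the rest `|t₂| < |t₂ - b₁|` (here `b₂ > 0` is used), where the centred Gaussian
is larger. Finally, by symmetry the centred integral is twice its upper half, which becomes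
`exp (θ₁² / 2) Q` after Fubini and completing the square.
-/

open Real Set

theorem setIntegral_le_of_involutive {α : Type*} [MeasurableSpace α] {μ : Measure α}
    {σ : α ≃ᵐ α} (hσμ : MeasurePreserving σ μ μ) (hσ : Function.Involutive σ)
    {s : Set α} (hs : MeasurableSet s) {f g : α → ℝ} (hf : IntegrableOn f s μ)
    (hg : IntegrableOn g s μ) (hgf : ∀ x ∈ s, σ x ∈ s → g (σ x) = f x)
    (hle : ∀ x ∈ s, σ x ∉ s → g x ≤ f x) :
    ∫ x in s, g x ∂μ ≤ ∫ x in s, f x ∂μ := by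
  have ht : MeasurableSet (σ ⁻¹' s) := σ.measurable hs
  have hsym : σ ⁻¹' (s ∩ σ ⁻¹' s) = s ∩ σ ⁻¹' s := by
    ext x
    simp only [preimage_inter, mem_inter_iff, mem_preimage, hσ x]
    exact and_comm
  have heq : ∫ x in s ∩ σ ⁻¹' s, g x ∂μ = ∫ x in s ∩ σ ⁻¹' s, f x ∂μ := by
    rw [← hσμ.setIntegral_preimage_emb σ.measurableEmbedding g, hsym]
    exact setIntegral_congr_fun (hs.inter ht) fun x hx => hgf x hx.1 hx.2
  have hdiff : ∫ x in s \ σ ⁻¹' s, g x ∂μ ≤ ∫ x in s \ σ ⁻¹' s, f x ∂μ :=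
    setIntegral_mono_on (hg.mono_set sdiff_subset) (hf.mono_set sdiff_subset) (hs.diff ht)
      fun x hx => hle x hx.1 hx.2
  rw [← integral_inter_add_sdiff ht hg, ← integral_inter_add_sdiff ht hf, heq]
  exact add_le_add_right hdiff _

theorem setIntegral_preimage_add_right {G : Type*} [MeasurableSpace G] [AddGroup G]
    [MeasurableAdd G] {μ : Measure G} [μ.IsAddRightInvariant] (f : G → ℝ) (s : Set G) (c : G) :
    ∫ x in (· + c) ⁻¹' s, f x ∂μ = ∫ x in s, f (x - c) ∂μ := by
  simpa only [add_sub_cancel_right] using (measurePreserving_add_right μ c).setIntegral_preimage_emb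
    (measurableEmbedding_addRight c) (fun x => f (x - c)) s

theorem setIntegral_snd_mem_le_fst {f : ℝ × ℝ → ℝ} {A : Set ℝ} (hA : MeasurableSet A)
    {h : ℝ → ℝ} (hh : Measurable h) (hf : IntegrableOn f {p | p.2 ∈ A ∧ h p.2 ≤ p.1}) :
    ∫ p in {p | p.2 ∈ A ∧ h p.2 ≤ p.1}, f p = ∫ y in A, ∫ x in Ioi (h y), f (x, y) := by
  have hR : MeasurableSet {p : ℝ × ℝ | p.2 ∈ A ∧ h p.2 ≤ p.1} :=
    (measurable_snd hA).inter (measurableSet_le (hh.comp measurable_snd) measurable_fst)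
  have hslice : ∀ y x, {p : ℝ × ℝ | p.2 ∈ A ∧ h p.2 ≤ p.1}.indicator f (x, y) =
      A.indicator (fun y => (Ici (h y)).indicator (fun x => f (x, y)) x) y := by
    intro y x
    by_cases hy : y ∈ A <;> simp [indicator, hy]
  have hint := (integrable_indicator_iff hR).2 hf
  rw [Measure.volume_eq_prod] at hint
  rw [← integral_indicator hR, Measure.volume_eq_prod, integral_prod_symm _ hint,
    ← integral_indicator hA]
  refine integral_congr_ae (.of_forall fun y => ?_)
  simp only [hslice]
  by_cases hy : y ∈ A
  · simp only [indicator_of_mem hy]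
    rw [integral_indicator measurableSet_Ici, integral_Ici_eq_integral_Ioi]
  · simp only [indicator_of_notMem hy, integral_zero]

def reflectSnd (c : ℝ) : (ℝ × ℝ) ≃ᵐ (ℝ × ℝ) :=
  (MeasurableEquiv.refl ℝ).prodCongr (MeasurableEquiv.subLeft c)

@[simp]
theorem reflectSnd_apply (c : ℝ) (p : ℝ × ℝ) : reflectSnd c p = (p.1, c - p.2) := rfl

theorem reflectSnd_involutive (c : ℝ) : Function.Involutive (reflectSnd c) := fun p => by simp

theorem measurePreserving_reflectSnd (c : ℝ) : MeasurePreserving (reflectSnd c) := by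
  rw [Measure.volume_eq_prod]
  exact (MeasurePreserving.id volume).prod (Measure.measurePreserving_sub_left volume c)

theorem setIntegral_eq_two_mul_setIntegral_snd_pos {s : Set (ℝ × ℝ)}
    (hs : reflectSnd 0 ⁻¹' s = s) {f : ℝ × ℝ → ℝ} (hf : IntegrableOn f s)
    (hfσ : ∀ p, f (reflectSnd 0 p) = f p) :
    ∫ p in s, f p = 2 * ∫ p in s ∩ {p | 0 < p.2}, f p := by
  set t : Set (ℝ × ℝ) := {p | 0 < p.2}
  have hneg : (s \ t : Set (ℝ × ℝ)) =ᵐ[volume] (reflectSnd 0 ⁻¹' (s ∩ t) : Set (ℝ × ℝ)) := by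
    have h : Prod.snd ⁻¹' Iic (0 : ℝ) =ᵐ[volume] (Prod.snd : ℝ × ℝ → ℝ) ⁻¹' Iio 0 := by
      rw [Measure.volume_eq_prod]
      exact Measure.quasiMeasurePreserving_snd.preimage_ae_eq Iio_ae_eq_Iic.symm
    have hdiff : s \ t = s ∩ Prod.snd ⁻¹' Iic 0 := by ext; simp [t]
    have hrefl : s ∩ reflectSnd 0 ⁻¹' t = s ∩ Prod.snd ⁻¹' Iio 0 := by ext; simp [t]
    rw [preimage_inter, hs, hdiff, hrefl]
    exact (Filter.EventuallyEq.refl _ s).inter h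
  have hσ := (measurePreserving_reflectSnd 0).setIntegral_preimage_emb
    (reflectSnd 0).measurableEmbedding f (s ∩ t)
  simp only [hfσ] at hσ
  rw [← integral_inter_add_sdiff (t := t) (measurableSet_lt measurable_const measurable_snd) hf,
    setIntegral_congr_set hneg, hσ]
  ring

noncomputable def gaussWeight (θ₁ θ₂ : ℝ) (p : ℝ × ℝ) : ℝ :=
  exp (θ₁ * p.1 + θ₂ * p.2 - (p.1 ^ 2 + p.2 ^ 2) / 2)

theorem integrable_exp_mul_sub_sq_div_two (θ : ℝ) :
    Integrable fun x : ℝ => exp (θ * x - x ^ 2 / 2) := by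
  have h := ((integrable_exp_neg_mul_sq (by norm_num : (0 : ℝ) < 1 / 2)).comp_sub_right θ).const_mul
    (exp (θ ^ 2 / 2))
  refine h.congr (.of_forall fun x => ?_)
  simp only [← exp_add]
  ring_nf

theorem integrable_gaussWeight (θ₁ θ₂ : ℝ) : Integrable (gaussWeight θ₁ θ₂) := by
  have h := (integrable_exp_mul_sub_sq_div_two θ₁).mul_prod (integrable_exp_mul_sub_sq_div_two θ₂)
  rw [← Measure.volume_eq_prod] at h
  refine h.congr (.of_forall fun p => ?_)
  simp only [gaussWeight, ← exp_add]
  ring_nf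

theorem gaussWeight_add_gaussWeight_neg_div_two (θ₁ θ₂ : ℝ) (p : ℝ × ℝ) :
    (gaussWeight θ₁ θ₂ p + gaussWeight θ₁ (-θ₂) p) / 2 = cosh (θ₂ * p.2) * gaussWeight θ₁ 0 p := by
  simp only [gaussWeight, cosh_eq, add_div, add_mul, div_mul_eq_mul_div, ← exp_add]
  ring_nf

def wedge (b₁ b₂ b₃ : ℝ) : Set (ℝ × ℝ) := {p | b₂ * |p.2 + b₁| ≤ p.1 + b₃}

theorem measurableSet_wedge (b₁ b₂ b₃ : ℝ) : MeasurableSet (wedge b₁ b₂ b₃) :=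
  measurableSet_le (((measurable_snd.add_const b₁).abs).const_mul b₂)
    (measurable_fst.add_const b₃)

theorem preimage_reflectSnd_wedge_zero (b₂ b₃ : ℝ) :
    reflectSnd 0 ⁻¹' wedge 0 b₂ b₃ = wedge 0 b₂ b₃ := by
  ext p
  simp [wedge]

theorem Ptilt_eq_setIntegral (θ₁ θ₂ b₁ b₂ b₃ : ℝ) :
    Ptilt θ₁ θ₂ b₁ b₂ b₃ = (2 * π)⁻¹ * ∫ p in wedge b₁ b₂ b₃, gaussWeight θ₁ θ₂ p := by
  rw [Ptilt, one_div]
  rfl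

theorem Ptilt_nonneg (θ₁ θ₂ b₁ b₂ b₃ : ℝ) : 0 ≤ Ptilt θ₁ θ₂ b₁ b₂ b₃ := by
  rw [Ptilt_eq_setIntegral]
  exact mul_nonneg (by positivity)
    (setIntegral_nonneg (measurableSet_wedge b₁ b₂ b₃) fun p _ => (exp_pos _).le)

theorem setIntegral_gaussWeight_zero_le {s : Set (ℝ × ℝ)} (hs : reflectSnd 0 ⁻¹' s = s)
    (θ₁ θ₂ : ℝ) : ∫ p in s, gaussWeight θ₁ 0 p ≤ ∫ p in s, gaussWeight θ₁ θ₂ p := by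
  have hint := fun θ => (integrable_gaussWeight θ₁ θ).integrableOn (s := s)
  have hneg : ∫ p in s, gaussWeight θ₁ (-θ₂) p = ∫ p in s, gaussWeight θ₁ θ₂ p := by
    rw [← (measurePreserving_reflectSnd 0).setIntegral_preimage_emb
      (reflectSnd 0).measurableEmbedding, hs]
    congr 1
    ext p
    simp only [gaussWeight, reflectSnd_apply]
    ring_nf
  calc ∫ p in s, gaussWeight θ₁ 0 p
      ≤ ∫ p in s, (gaussWeight θ₁ θ₂ p + gaussWeight θ₁ (-θ₂) p) / 2 := by
        refine setIntegral_mono (hint 0) (((hint θ₂).add (hint (-θ₂))).div_const 2) fun p => ?_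
        rw [gaussWeight_add_gaussWeight_neg_div_two]
        exact le_mul_of_one_le_left (exp_pos _).le (one_le_cosh _)
    _ = ∫ p in s, gaussWeight θ₁ θ₂ p := by
        rw [integral_div, integral_add (hint θ₂) (hint (-θ₂)), hneg]
        ring

theorem Ptilt_zero_le (θ₁ θ₂ b₂ b₃ : ℝ) : Ptilt θ₁ 0 0 b₂ b₃ ≤ Ptilt θ₁ θ₂ 0 b₂ b₃ := by
  rw [Ptilt_eq_setIntegral, Ptilt_eq_setIntegral]
  gcongr ?_ * ?_
  exact setIntegral_gaussWeight_zero_le (preimage_reflectSnd_wedge_zero b₂ b₃) θ₁ θ₂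

theorem Ptilt_le_Ptilt_zero (θ₁ b₁ : ℝ) {b₂ : ℝ} (hb₂ : 0 < b₂) (b₃ : ℝ) :
    Ptilt θ₁ 0 b₁ b₂ b₃ ≤ Ptilt θ₁ 0 0 b₂ b₃ := by
  rw [Ptilt_eq_setIntegral, Ptilt_eq_setIntegral]
  gcongr ?_ * ?_
  have hshift : (· + (0, b₁)) ⁻¹' wedge 0 b₂ b₃ = wedge b₁ b₂ b₃ := by
    ext p
    simp [wedge]
  rw [← hshift, setIntegral_preimage_add_right]
  refine setIntegral_le_of_involutive (measurePreserving_reflectSnd b₁) (reflectSnd_involutive b₁)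
    (measurableSet_wedge 0 b₂ b₃) (integrable_gaussWeight θ₁ 0).integrableOn
    ((integrable_gaussWeight θ₁ 0).comp_sub_right _).integrableOn (fun p _ _ => ?_)
    (fun p hp hσp => ?_)
  · simp only [gaussWeight, reflectSnd_apply, Prod.mk_sub_mk]
    ring_nf
  · simp only [wedge, mem_ofPred_eq, reflectSnd_apply, add_zero, not_le] at hp hσp
    have habs : |p.2| ≤ |p.2 - b₁| := by
      rw [abs_sub_comm]
      exact le_of_lt (lt_of_mul_lt_mul_left (hp.trans_lt hσp) hb₂.le)
    have hsq : p.2 ^ 2 ≤ (p.2 - b₁) ^ 2 := sq_le_sq.2 habs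
    simp only [gaussWeight, Prod.fst_sub, Prod.snd_sub, sub_zero, exp_le_exp]
    linarith

theorem exp_neg_sq_add_sq_div_two_eq (θ a : ℝ) (z : ℝ × ℝ) :
    exp (-((z.1 - θ - a) ^ 2 + z.2 ^ 2) / 2) =
      exp (-(θ ^ 2) / 2) * gaussWeight θ 0 (z - (a, 0)) := by
  simp only [gaussWeight, Prod.fst_sub, Prod.snd_sub, sub_zero, ← exp_add]
  ring_nf

theorem setIntegral_wedge_inter_snd_pos (θ a₁ a₂ : ℝ) :
    ∫ p in wedge 0 a₁ a₂ ∩ {p | 0 < p.2}, gaussWeight θ 0 p = exp (θ ^ 2 / 2) * Q θ a₁ a₂ := by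
  set R : Set (ℝ × ℝ) := {z | z.2 ∈ Ioi 0 ∧ a₁ * z.2 ≤ z.1}
  have hint : Integrable fun z : ℝ × ℝ => exp (-((z.1 - θ - a₂) ^ 2 + z.2 ^ 2) / 2) := by
    simp_rw [exp_neg_sq_add_sq_div_two_eq]
    exact ((integrable_gaussWeight θ 0).comp_sub_right _).const_mul _
  have hQ : Q θ a₁ a₂ = ∫ z in R, exp (-((z.1 - θ - a₂) ^ 2 + z.2 ^ 2) / 2) :=
    (setIntegral_snd_mem_le_fst measurableSet_Ioi (measurable_const_mul a₁) hint.integrableOn).symm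
  have hpre : (· + (a₂, 0)) ⁻¹' R = wedge 0 a₁ a₂ ∩ {p | 0 < p.2} := by
    ext p
    simp only [R, wedge, mem_preimage, mem_ofPred_eq, mem_inter_iff, mem_Ioi, Prod.fst_add,
      Prod.snd_add, add_zero]
    rw [and_comm]
    exact and_congr_left fun hp => by rw [abs_of_pos hp]
  simp_rw [← hpre, setIntegral_preimage_add_right, hQ, exp_neg_sq_add_sq_div_two_eq,
    integral_const_mul, ← mul_assoc, neg_div, ← exp_add, add_neg_cancel, exp_zero, one_mul]

theorem Ptilt_zero_zero (θ₁ b₂ b₃ : ℝ) :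
    Ptilt θ₁ 0 0 b₂ b₃ = (1 / π) * exp (θ₁ ^ 2 / 2) * Q θ₁ b₂ b₃ := by
  rw [Ptilt_eq_setIntegral, setIntegral_eq_two_mul_setIntegral_snd_pos
    (preimage_reflectSnd_wedge_zero b₂ b₃) (integrable_gaussWeight θ₁ 0).integrableOn
    (fun p => by simp [gaussWeight]), setIntegral_wedge_inter_snd_pos]
  field_simp

theorem stmt14 (θ₁ b₁ b₃ b₂ : ℝ) (hb₂ : 0 < b₂) :
    (⨅ θ₂ : ℝ, Ptilt θ₁ θ₂ b₁ b₂ b₃) ≤ (⨅ θ₂ : ℝ, Ptilt θ₁ θ₂ 0 b₂ b₃) ∧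
    (⨅ θ₂ : ℝ, Ptilt θ₁ θ₂ 0 b₂ b₃) = Ptilt θ₁ 0 0 b₂ b₃ ∧
    Ptilt θ₁ 0 0 b₂ b₃ = (1 / Real.pi) * Real.exp (θ₁ ^ 2 / 2) * Q θ₁ b₂ b₃ := by
  have hbdd : ∀ b, BddBelow (range fun θ₂ => Ptilt θ₁ θ₂ b b₂ b₃) := fun b =>
    ⟨0, forall_mem_range.2 fun θ₂ => Ptilt_nonneg θ₁ θ₂ b b₂ b₃⟩
  have hmin : ⨅ θ₂, Ptilt θ₁ θ₂ 0 b₂ b₃ = Ptilt θ₁ 0 0 b₂ b₃ :=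
    le_antisymm (ciInf_le (hbdd 0) 0) (le_ciInf fun θ₂ => Ptilt_zero_le θ₁ θ₂ b₂ b₃)
  refine ⟨?_, hmin, Ptilt_zero_zero θ₁ b₂ b₃⟩
  rw [hmin]
  exact (ciInf_le (hbdd b₁) 0).trans (Ptilt_le_Ptilt_zero θ₁ b₁ hb₂ b₃)
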